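/- If l agents start at a common root of a cycle of n nodes (n = l·k, k ≥ 2) and each can cross at most one edge per round, then any schedule reaching a configuration where all pairwise distances between occupied nodes are at least k requires at least ⌊n/2⌋ - ⌈k/2⌉ rounds in the worst case; in particular the number of rounds needed is Ω(n) for fixed k. -/

import Mathlib

open SimpleGraph
open scoped Fin.NatCast Fin.IntCast Fin.CommRing

private lemma cyc_walk_len (n : ℕ) (hn : 2 ≤ n) (x : Fin n) (m : ℕ) :
    haveI : NeZero n := ⟨by omega⟩
    ∃ w : (cycleGraph n).Walk x (x + (m : Fin n)), w.length = m := by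
  haveI : NeZero n := ⟨by omega⟩
  induction m with
  | zero =>
    have h : x = x + ((0 : ℕ) : Fin n) := by push_cast; ring
    exact ⟨(SimpleGraph.Walk.nil : (cycleGraph n).Walk x x).copy rfl h, by simp⟩
  | succ m ih =>
    obtain ⟨w, hw⟩ := ih
    have hone : (1 : Fin n).val = 1 := by
      rw [Fin.val_one']
      exact Nat.mod_eq_of_lt (by omega)
    have hadj : (cycleGraph n).Adj (x + (m : Fin n)) (x + ((m + 1 : ℕ) : Fin n)) := by
      rw [cycleGraph_adj']
      right
      have h1 : x + ((m + 1 : ℕ) : Fin n) - (x + (m : Fin n)) = 1 := by push_cast; ring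
      rw [h1, hone]
    exact ⟨w.concat hadj, by simp [hw]⟩

private lemma cyc_dist_le (n : ℕ) (hn : 2 ≤ n) (x : Fin n) (z : ℤ) :
    haveI : NeZero n := ⟨by omega⟩
    (cycleGraph n).dist x (x + (z : Fin n)) ≤ z.natAbs := by
  haveI : NeZero n := ⟨by omega⟩
  rcases le_or_gt 0 z with hz | hz
  · obtain ⟨m, rfl⟩ := Int.eq_ofNat_of_zero_le hz
    obtain ⟨w, hw⟩ := cyc_walk_len n hn x m
    have hc : x + (m : Fin n) = x + ((m : ℤ) : Fin n) := by push_cast; ring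
    calc (cycleGraph n).dist x (x + ((m : ℤ) : Fin n)) ≤ (w.copy rfl hc).length :=
          SimpleGraph.dist_le _
      _ = (↑m : ℤ).natAbs := by simp [hw]
  · obtain ⟨m, hm⟩ : ∃ m : ℕ, z = -(m : ℤ) := ⟨z.natAbs, by omega⟩
    subst hm
    set y := x + ((-(m : ℤ) : ℤ) : Fin n) with hy
    have hyx : y + (m : Fin n) = x := by rw [hy]; push_cast; ring
    obtain ⟨w, hw⟩ := cyc_walk_len n hn y m
    rw [SimpleGraph.dist_comm]
    calc (cycleGraph n).dist y x ≤ (w.copy rfl hyx).length := SimpleGraph.dist_le _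
      _ = (-(m : ℤ)).natAbs := by simp [hw]

private lemma gaps_lemma (l k T : ℕ) (hl : 1 ≤ l) (hk : 1 ≤ k) (Z : Fin l → ℤ)
    (hb : ∀ a, (Z a).natAbs ≤ T)
    (hgap : ∀ a b, a ≠ b → k ≤ (Z a - Z b).natAbs) :
    (l - 1) * k ≤ 2 * T := by
  have hinj : Function.Injective Z := by
    intro a b hab
    by_contra hne
    have := hgap a b hne
    rw [hab] at this
    simp at this
    omega
  set s : Finset ℤ := Finset.image Z Finset.univ with hs
  have hcard : s.card = l := by
    rw [hs, Finset.card_image_of_injective _ hinj, Finset.card_univ, Fintype.card_fin]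
  set g : Fin l → ℤ := fun i => ((s.orderIsoOfFin hcard i : ℤ)) with hg
  have hmono : StrictMono g := fun i j hij => by
    exact_mod_cast (s.orderIsoOfFin hcard).strictMono hij
  have hmem : ∀ i, ∃ a, Z a = g i := by
    intro i
    have : (g i) ∈ s := (s.orderIsoOfFin hcard i).2
    simpa [hs] using this
  have hgap' : ∀ i j : Fin l, i < j → (k : ℤ) ≤ g j - g i := by
    intro i j hij
    obtain ⟨a, ha⟩ := hmem i
    obtain ⟨b, hb'⟩ := hmem j
    have hne : a ≠ b := by
      intro h
      have : g i = g j := by rw [← ha, ← hb', h]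
      exact (ne_of_lt (hmono hij)) this
    have := hgap a b hne
    have hlt : g i < g j := hmono hij
    omega
  have hbd : ∀ i, (g i).natAbs ≤ T := by
    intro i
    obtain ⟨a, ha⟩ := hmem i
    rw [← ha]; exact hb a
  have chain : ∀ m (hm : m < l), g ⟨0, hl⟩ + m * k ≤ g ⟨m, hm⟩ := by
    intro m
    induction m with
    | zero => intro hm; simp
    | succ m ih =>
      intro hm
      have hm' : m < l := by omega
      have h1 := ih hm'
      have h2 := hgap' ⟨m, hm'⟩ ⟨m + 1, hm⟩ (by simp [Fin.lt_def])
      push_cast at h1 h2 ⊢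
      linarith
  have hfin := chain (l - 1) (by omega)
  have b1 := hbd ⟨0, hl⟩
  have b2 := hbd ⟨l - 1, by omega⟩
  have hcast : ((l - 1 : ℕ) : ℤ) * k ≤ 2 * T := by
    have := hfin
    omega
  exact_mod_cast hcast

/-- If `l` agents start at a common root of the cycle `Cₙ` with `n = l·k`, `k ≥ 2`,
each crossing at most one edge per round, then any schedule that at round `T`
reaches a configuration in which all pairwise distances between (distinct) agents
are at least `k` satisfies `T ≥ ⌊n/2⌋ - ⌈k/2⌉`; in particular the number of rounds
needed is `Ω(n)` for fixed `k`. -/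
theorem dkd_time_lower_bound (n l k : ℕ) (hk : 2 ≤ k) (hn : n = l * k)
    (root : Fin n) (pos : Fin l → ℕ → Fin n)
    (h0 : ∀ a, pos a 0 = root)
    (hstep : ∀ a t, pos a (t + 1) = pos a t ∨
      (cycleGraph n).Adj (pos a t) (pos a (t + 1)))
    (T : ℕ)
    (hT : ∀ a b : Fin l, a ≠ b → k ≤ (cycleGraph n).dist (pos a T) (pos b T)) :
    n / 2 - (k + 1) / 2 ≤ T := by
  have hl : 1 ≤ l := by
    by_contra h
    have hl0 : l = 0 := by omega
    rw [hl0, zero_mul] at hn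
    exact absurd root.isLt (by omega)
  have hn2 : 2 ≤ n := by
    rw [hn]; simpa using Nat.mul_le_mul hl hk
  haveI : NeZero n := ⟨by omega⟩
  have hone : (1 : Fin n).val = 1 := by
    rw [Fin.val_one']
    exact Nat.mod_eq_of_lt (by omega)
  -- lift trajectories to integers
  have key : ∀ t a, ∃ z : ℤ, z.natAbs ≤ t ∧ pos a t = root + (z : Fin n) := by
    intro t
    induction t with
    | zero => intro a; exact ⟨0, by simp, by simp [h0 a]⟩
    | succ t ih =>
      intro a
      obtain ⟨z, hz, hp⟩ := ih a
      rcases hstep a t with h | h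
      · exact ⟨z, by omega, by rw [h, hp]⟩
      · rw [cycleGraph_adj'] at h
        rcases h with h | h
        · -- (pos a t - pos a (t+1)).val = 1, so pos a (t+1) = pos a t - 1
          refine ⟨z - 1, by omega, ?_⟩
          have : pos a t - pos a (t + 1) = 1 := by
            apply Fin.ext; rw [h, hone]
          have h2 : pos a (t + 1) = pos a t - 1 := by
            rw [← this]; ring
          rw [h2, hp]; push_cast; ring
        · refine ⟨z + 1, by omega, ?_⟩
          have : pos a (t + 1) - pos a t = 1 := by
            apply Fin.ext; rw [h, hone]
          have h2 : pos a (t + 1) = pos a t + 1 := by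
            rw [← this]; ring
          rw [h2, hp]; push_cast; ring
  choose Z hZbd hZpos using key T
  have hgap : ∀ a b, a ≠ b → k ≤ (Z a - Z b).natAbs := by
    intro a b hab
    have h1 := hT b a (fun h => hab h.symm)
    have h2 : pos a T = pos b T + ((Z a - Z b : ℤ) : Fin n) := by
      rw [hZpos a, hZpos b]; push_cast; ring
    have h3 := cyc_dist_le n hn2 (pos b T) (Z a - Z b)
    rw [← h2] at h3
    omega
  have := gaps_lemma l k T hl (by omega) Z hZbd hgap
  have hlk : (l - 1) * k = n - k := by
    rw [hn, Nat.sub_mul, one_mul]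
  rw [hlk] at this
  have hkn : k ≤ n := by
    rw [hn]; exact Nat.le_mul_of_pos_left k (by omega)
  omega
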